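/- Model a one-hidden-layer network as: hidden layer a finite set S with weights W : Fin m → S → ℝ and bias b : S → ℝ, output weights V : S → ℝ, output value F(x) = ∑ s ∈ S, V(s) * ReLU(∑ j, W(j,s)*x(j) + b(s)). Suppose ~ is an equivalence relation on S and ρ : S → ℝ with ρ(s) > 0 for all s, such that whenever s ~ t: ρ(s)*b(s) = ρ(t)*b(t) and for every j, ρ(s)*W(j,s) = ρ(t)*W(j,t). Let R ⊆ S be a set of representatives (one per equivalence class) and define V'(r) = ∑ s ~ r, ρ(r) * V(s) / ρ(s), W'(j,r) = W(j,r), b'(r) = b(r). Then for every input x, ∑ r ∈ R, V'(r) * ReLU(∑ j, W'(j,r)*x(j) + b'(r)) = F(x). -/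

import Mathlib

noncomputable def ReLU (x : ℝ) : ℝ := max x 0

/-!
ReLU is positively homogeneous, so a neuron `s` equivalent to the representative `t` of its
class satisfies `ρ t * ReLU (a t) = ρ s * ReLU (a s)` on preactivations `a`. Hence the neuron's
contribution `V s * ReLU (a s)` equals `(ρ t * V s / ρ s) * ReLU (a t)`, and summing over each
class, then over the representatives, recovers the full output sum.
-/

open Finset

theorem ReLU_mul_of_nonneg {c : ℝ} (hc : 0 ≤ c) (y : ℝ) : ReLU (c * y) = c * ReLU y := by
  simp only [ReLU, mul_max_of_nonneg _ _ hc, mul_zero]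

theorem mul_ReLU_eq_of_mul_eq {c c' a a' : ℝ} (hc : 0 ≤ c) (hc' : 0 ≤ c')
    (h : c * a = c' * a') : c * ReLU a = c' * ReLU a' := by
  rw [← ReLU_mul_of_nonneg hc, ← ReLU_mul_of_nonneg hc', h]

theorem mul_affine_eq_of_mul_eq {ι : Type*} [Fintype ι] {c c' β β' : ℝ} {w w' : ι → ℝ}
    (hw : ∀ j, c * w j = c' * w' j) (hβ : c * β = c' * β') (x : ι → ℝ) :
    c * (∑ j, w j * x j + β) = c' * (∑ j, w' j * x j + β') := by
  simp only [mul_add, mul_sum, ← mul_assoc, hw, hβ]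

theorem sum_sum_filter_of_existsUnique {α β M : Type*} [Fintype α] [AddCommMonoid M]
    (r : α → β → Prop) [DecidableRel r] (R : Finset β) (hR : ∀ s, ∃! t, t ∈ R ∧ r s t)
    (f : α → M) : ∑ t ∈ R, ∑ s ∈ univ.filter (fun s => r s t), f s = ∑ s, f s := by
  classical
  choose rep hrep hrep_unique using hR
  have fiber_eq : ∀ t ∈ R, univ.filter (fun s => r s t) = univ.filter (fun s => rep s = t) := by
    intro t ht
    ext s
    simp only [mem_filter, mem_univ, true_and]
    exact ⟨fun hst => (hrep_unique s t ⟨ht, hst⟩).symm, fun h => h ▸ (hrep s).2⟩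
  rw [sum_congr rfl fun t ht => by rw [fiber_eq t ht]]
  exact sum_fiberwise_of_maps_to (fun s _ => (hrep s).1) f

theorem quotient_network_preserves_semantics_general
    (m : ℕ) (S : Type*) [Fintype S]
    (W : Fin m → S → ℝ) (b : S → ℝ) (V : S → ℝ)
    (r : S → S → Prop) [DecidableRel r]
    (ρ : S → ℝ) (hρ : ∀ s, 0 < ρ s)
    (hb : ∀ s t, r s t → ρ s * b s = ρ t * b t)
    (hW : ∀ s t, r s t → ∀ j, ρ s * W j s = ρ t * W j t)
    (R : Finset S) (hR : ∀ s : S, ∃! t, t ∈ R ∧ r s t)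
    (x : Fin m → ℝ) :
    ∑ rep ∈ R,
        (∑ s ∈ Finset.univ.filter (fun s => r s rep), ρ rep * V s / ρ s) *
          ReLU (∑ j, W j rep * x j + b rep) =
      ∑ s, V s * ReLU (∑ j, W j s * x j + b s) := by
  have class_term : ∀ s t, r s t →
      ρ t * V s / ρ s * ReLU (∑ j, W j t * x j + b t) = V s * ReLU (∑ j, W j s * x j + b s) := by
    intro s t hst
    have hReLU := mul_ReLU_eq_of_mul_eq (hρ s).le (hρ t).le
      (mul_affine_eq_of_mul_eq (hW s t hst) (hb s t hst) x)
    field_simp [(hρ s).ne']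
    linear_combination V s * hReLU.symm
  rw [← sum_sum_filter_of_existsUnique r R hR]
  refine sum_congr rfl fun t _ => ?_
  rw [sum_mul]
  exact sum_congr rfl fun s hs => class_term s t (mem_filter.mp hs).2

theorem quotient_network_preserves_semantics
    (m : ℕ) (S : Type*) [Fintype S] [DecidableEq S]
    (W : Fin m → S → ℝ) (b : S → ℝ) (V : S → ℝ)
    (r : S → S → Prop) [DecidableRel r] (hr : Equivalence r)
    (ρ : S → ℝ) (hρ : ∀ s, 0 < ρ s)
    (hb : ∀ s t, r s t → ρ s * b s = ρ t * b t)
    (hW : ∀ s t, r s t → ∀ j, ρ s * W j s = ρ t * W j t)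
    (R : Finset S) (hR : ∀ s : S, ∃! t, t ∈ R ∧ r s t)
    (x : Fin m → ℝ) :
    ∑ rep ∈ R,
        (∑ s ∈ Finset.univ.filter (fun s => r s rep), ρ rep * V s / ρ s) *
          ReLU (∑ j, W j rep * x j + b rep) =
      ∑ s, V s * ReLU (∑ j, W j s * x j + b s) :=
  quotient_network_preserves_semantics_general m S W b V r ρ hρ hb hW R hR x
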